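/- arXiv:1801.06883 — 8 statements merged into one kernel-verified Lean document; each statement's English description precedes it below -/
import Mathlib

section
/- Let M be a biclosed poset. If (f, F) is a dialectica morphism from A = (U,X,α) to A' = (U',X',α') and (g, G) is a dialectica morphism from B = (V,Y,β) to B' = (V',Y',β'), then the pair consisting of f × g : U × V → U' × V' and the map (V' → X') × (U' → Y') → (V → X) × (U → Y) sending (F', G') to (F ∘ F' ∘ g, G ∘ G' ∘ f) is a dialectica morphism from A ⊗ B to A' ⊗ B'; i.e., the tensor product is functorial. -/
/-- A biclosed poset: a partially ordered monoid with left and right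
pseudocomplements adjoint to the multiplication. -/
structure BiclosedPoset (M : Type*) [PartialOrder M] where
  mul : M → M → M
  e : M
  mul_assoc : ∀ a b c, mul (mul a b) c = mul a (mul b c)
  e_mul : ∀ a, mul e a = a
  mul_e : ∀ a, mul a e = a
  lpc : M → M → M  -- a ⇀ b
  rpc : M → M → M  -- b ↼ a
  lpc_adj : ∀ a b x, mul a x ≤ b ↔ x ≤ lpc a b
  rpc_adj : ∀ a b x, mul x a ≤ b ↔ x ≤ rpc b a

/-- A dialectica Lambek space over `M` is given by sets `U`, `X` and a
relation `α : U × X → M`; a pair `(f, F)` is a dialectica morphism from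
`(U, X, α)` to `(V, Y, β)` when `α (u, F y) ≤ β (f u, y)` for all `u`, `y`. -/
def IsDialMorph {M : Type*} [PartialOrder M] {U X V Y : Type*}
    (α : U × X → M) (β : V × Y → M) (f : U → V) (F : Y → X) : Prop :=
  ∀ u y, α (u, F y) ≤ β (f u, y)

/-- The relation of the tensor product of dialectica Lambek spaces:
`(α ⊗ β)((u,v),(F,G)) = α(u, F v) ∘ β(G u, v)`. -/
def tensorRel {M : Type*} [PartialOrder M] (B : BiclosedPoset M)
    {U X V Y : Type*} (α : U × X → M) (β : V × Y → M) :
    (U × V) × ((V → X) × (U → Y)) → M :=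
  fun p => B.mul (α (p.1.1, p.2.1 p.1.2)) (β (p.1.2, p.2.2 p.1.1))

lemma BiclosedPoset.mul_mono {M : Type*} [PartialOrder M] (B : BiclosedPoset M)
    {a a' b b' : M} (ha : a ≤ a') (hb : b ≤ b') : B.mul a b ≤ B.mul a' b' := by
  have h1 : B.mul a b ≤ B.mul a' b := by
    rw [B.rpc_adj]
    exact ha.trans ((B.rpc_adj b (B.mul a' b) a').mp le_rfl)
  have h2 : B.mul a' b ≤ B.mul a' b' := by
    rw [B.lpc_adj]
    exact hb.trans ((B.lpc_adj a' (B.mul a' b') b').mp le_rfl)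
  exact h1.trans h2

/-- Functoriality of the tensor product: given dialectica morphisms
`(f, F) : A → A'` and `(g, G) : B → B'`, the pair consisting of `f × g` and
`(F', G') ↦ (F ∘ F' ∘ g, G ∘ G' ∘ f)` is a dialectica morphism
`A ⊗ B → A' ⊗ B'`. -/
theorem tensor_functorial {M : Type*} [PartialOrder M] (B : BiclosedPoset M)
    {U X U' X' V Y V' Y' : Type*}
    (α : U × X → M) (α' : U' × X' → M) (β : V × Y → M) (β' : V' × Y' → M)
    (f : U → U') (F : X' → X) (g : V → V') (G : Y' → Y)
    (hf : IsDialMorph α α' f F) (hg : IsDialMorph β β' g G) :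
    IsDialMorph (tensorRel B α β) (tensorRel B α' β')
      (fun p => (f p.1, g p.2))
      (fun FG => (fun v => F (FG.1 (g v)), fun u => G (FG.2 (f u)))) := by
  intro u y
  exact B.mul_mono (hf u.1 (y.1 (g u.2))) (hg u.2 (y.2 (f u.1)))
end

section
/- Let M be a biclosed poset and A = (U,X,α), B = (V,Y,β), C = (W,Z,γ) dialectica Lambek spaces over M. The canonical associator pair — whose first component is the map ((u,v),w) ↦ (u,(v,w)) from (U×V)×W to U×(V×W), and whose second component is the evident currying map sending a second-component element of A ⊗ (B ⊗ C) to one of (A ⊗ B) ⊗ C — is a dialectica morphism from (A ⊗ B) ⊗ C to A ⊗ (B ⊗ C); this holds because ∘ is associative. -/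
/-- The canonical associator is a dialectica morphism
`(A ⊗ B) ⊗ C → A ⊗ (B ⊗ C)` (since `∘` is associative). -/
theorem tensor_assoc {M : Type*} [PartialOrder M] (B : BiclosedPoset M)
    {U X V Y W Z : Type*}
    (α : U × X → M) (β : V × Y → M) (γ : W × Z → M) :
    IsDialMorph (tensorRel B (tensorRel B α β) γ) (tensorRel B α (tensorRel B β γ))
      (fun p => (p.1.1, (p.1.2, p.2)))
      (fun FG =>
        (fun w => (fun v => FG.1 (v, w), fun u => (FG.2 u).1 w),
         fun uv => (FG.2 uv.1).2 uv.2)) := by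
  intro u y
  simp only [IsDialMorph, tensorRel]
  rw [B.mul_assoc]
end

section
/- Let M be a biclosed poset and A = (U,X,α), B = (V,Y,β), C = (W,Z,γ) dialectica Lambek spaces over M. For any h : U × V → W and H : Z → (V → X) × (U → Y), define g : V → (U → W) × (Z → X) by g(v) = (λu. h(u,v), λz. fst(H z) v) and G : U × Z → Y by G(u,z) = snd(H z) u. Then (h, H) is a dialectica morphism from A ⊗ B to C if and only if (g, G) is a dialectica morphism from B to A ⇀ C; consequently Hom(A ⊗ B, C) ≅ Hom(B, A ⇀ C). -/
/-- The relation of the left internal hom `A ⇀ C`: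
`(α ⇀ γ)((f,F),(u,z)) = α(u, F z) ⇀ γ(f u, z)`. -/
def lhomRel {M : Type*} [PartialOrder M] (B : BiclosedPoset M)
    {U X W Z : Type*} (α : U × X → M) (γ : W × Z → M) :
    ((U → W) × (Z → X)) × (U × Z) → M :=
  fun p => B.lpc (α (p.2.1, p.1.2 p.2.2)) (γ (p.1.1 p.2.1, p.2.2))

/-- Currying adjunction for the left internal hom:
`(h, H) : A ⊗ B → C` is a dialectica morphism iff the curried pair
`(g, G) : B → A ⇀ C` is; hence `Hom(A ⊗ B, C) ≅ Hom(B, A ⇀ C)`. -/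
theorem lhom_adjunction {M : Type*} [PartialOrder M] (B : BiclosedPoset M)
    {U X V Y W Z : Type*}
    (α : U × X → M) (β : V × Y → M) (γ : W × Z → M)
    (h : U × V → W) (H : Z → (V → X) × (U → Y)) :
    IsDialMorph (tensorRel B α β) γ h H ↔
    IsDialMorph β (lhomRel B α γ)
      (fun v => (fun u => h (u, v), fun z => (H z).1 v))
      (fun p => (H p.2).2 p.1) := by
  constructor
  · intro hm v p
    exact (B.lpc_adj _ _ _).mp (hm (p.1, v) p.2)
  · intro hm p z
    exact (B.lpc_adj _ _ _).mpr (hm p.2 (p.1, z))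
end

section
/- Let M be a biclosed poset and A = (U,X,α), B = (V,Y,β), C = (W,Z,γ) dialectica Lambek spaces over M. For any h : U × V → W and H : Z → (V → X) × (U → Y), define g : U → (V → W) × (Z → Y) by g(u) = (λv. h(u,v), λz. snd(H z) u) and G : V × Z → X by G(v,z) = fst(H z) v. Then (h, H) is a dialectica morphism from A ⊗ B to C if and only if (g, G) is a dialectica morphism from A to C ↼ B; consequently Hom(A ⊗ B, C) ≅ Hom(A, C ↼ B). -/
/-- The relation of the right internal hom `C ↼ B`:
`(γ ↼ β)((f,F),(v,z)) = γ(f v, z) ↼ β(v, F z)`. -/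
def rhomRel {M : Type*} [PartialOrder M] (B : BiclosedPoset M)
    {V Y W Z : Type*} (γ : W × Z → M) (β : V × Y → M) :
    ((V → W) × (Z → Y)) × (V × Z) → M :=
  fun p => B.rpc (γ (p.1.1 p.2.1, p.2.2)) (β (p.2.1, p.1.2 p.2.2))

/-- Currying adjunction for the right internal hom:
`(h, H) : A ⊗ B → C` is a dialectica morphism iff the curried pair
`(g, G) : A → C ↼ B` is; hence `Hom(A ⊗ B, C) ≅ Hom(A, C ↼ B)`. -/
theorem rhom_adjunction {M : Type*} [PartialOrder M] (B : BiclosedPoset M)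
    {U X V Y W Z : Type*}
    (α : U × X → M) (β : V × Y → M) (γ : W × Z → M)
    (h : U × V → W) (H : Z → (V → X) × (U → Y)) :
    IsDialMorph (tensorRel B α β) γ h H ↔
    IsDialMorph α (rhomRel B γ β)
      (fun u => (fun v => h (u, v), fun z => (H z).2 u))
      (fun p => (H p.2).1 p.1) := by
  constructor
  · intro hm u ⟨v, z⟩
    exact (B.rpc_adj _ _ _).mp (hm (u, v) z)
  · intro hm ⟨u, v⟩ z
    exact (B.rpc_adj _ _ _).mpr (hm u (v, z))
end

section
/- Let M be a biclosed poset with exchange and A = (U,X,α), B = (V,Y,β) dialectica Lambek spaces over M. Then the pair consisting of the swap map (u,v) ↦ (v,u) : U × V → V × U and the swap map (G,F) ↦ (F,G) : (U → Y) × (V → X) → (V → X) × (U → Y) is a dialectica morphism βL from (κA) ⊗ B to B ⊗ (κA). -/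
/-- A biclosed poset with exchange: additionally carries κ : M → M. -/
structure BiclosedPosetWithExchange (M : Type*) [PartialOrder M] extends
    BiclosedPoset M where
  kappa : M → M
  kappa_mono : ∀ a b, a ≤ b → kappa a ≤ kappa b
  kappa_min : ∀ a, kappa a ≤ a
  kappa_dup : ∀ a, kappa a ≤ kappa (kappa a)
  kappa_lex : ∀ a b, mul (kappa a) b ≤ mul b (kappa a)
  kappa_rex : ∀ a b, mul a (kappa b) ≤ mul (kappa b) a

/-- The κ-modality on dialectica Lambek spaces: `κ(U,X,α) = (U, X, κ ∘ α)`. -/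
def kappaRel {M : Type*} [PartialOrder M] (E : BiclosedPosetWithExchange M)
    {U X : Type*} (α : U × X → M) : U × X → M :=
  fun p => E.kappa (α p)

/-- Left exchange morphism `βL`: the swap maps form a dialectica morphism
from `(κA) ⊗ B` to `B ⊗ (κA)`. -/
theorem kappa_exchange_left {M : Type*} [PartialOrder M]
    (E : BiclosedPosetWithExchange M) {U X V Y : Type*}
    (α : U × X → M) (β : V × Y → M) :
    IsDialMorph (tensorRel E.toBiclosedPoset (kappaRel E α) β)
      (tensorRel E.toBiclosedPoset β (kappaRel E α))
      (fun p => (p.2, p.1))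
      (fun p => (p.2, p.1)) := by
  intro u y
  exact E.kappa_lex _ _
end

section
/- Let M be a biclosed poset with exchange and A = (U,X,α), B = (V,Y,β) dialectica Lambek spaces over M. Then the pair consisting of the swap map (u,v) ↦ (v,u) : U × V → V × U and the swap map (G,F) ↦ (F,G) : (U → Y) × (V → X) → (V → X) × (U → Y) is a dialectica morphism βR from A ⊗ (κB) to (κB) ⊗ A. -/
/-- Right exchange morphism `βR`: the swap maps form a dialectica morphism
from `A ⊗ (κB)` to `(κB) ⊗ A`. -/
theorem kappa_exchange_right {M : Type*} [PartialOrder M]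
    (E : BiclosedPosetWithExchange M) {U X V Y : Type*}
    (α : U × X → M) (β : V × Y → M) :
    IsDialMorph (tensorRel E.toBiclosedPoset α (kappaRel E β))
      (tensorRel E.toBiclosedPoset (kappaRel E β) α)
      (fun p => (p.2, p.1))
      (fun p => (p.2, p.1)) := by
  intro u y
  exact E.kappa_rex _ _
end

section
/- Let M be a biclosed poset (arbitrary, with ! defined via lists), and A = (U,X,α) a dialectica Lambek space over M. Then the contraction pair d, whose first component is the diagonal u ↦ (u,u) : U → U × U and whose second component sends (G, H) ∈ ((U → (U → List X)) × (U → (U → List X))) to the function λu. (G(u)(u)) ++ (H(u)(u)) : U → List X, is a dialectica morphism from !A to !A ⊗ !A, because the list-product satisfies (!α)(u, l₁ ++ l₂) = (!α)(u, l₁) ∘ (!α)(u, l₂). -/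
/-- The relation of the of-course modality `!(U,X,α) = (U, U → List X, !α)`,
where `(!α)(u, f)` is the ordered product of `α(u, xᵢ)` over `f u = [x₁,…,xₙ]`
(empty product `e`). -/
def bangRel {M : Type*} [PartialOrder M] (B : BiclosedPoset M)
    {U X : Type*} (α : U × X → M) : U × (U → List X) → M :=
  fun p => ((p.2 p.1).map (fun x => α (p.1, x))).foldr B.mul B.e


lemma foldr_mul_append {M : Type*} [PartialOrder M] (B : BiclosedPoset M)
    (l₁ l₂ : List M) :
    (l₁ ++ l₂).foldr B.mul B.e = B.mul (l₁.foldr B.mul B.e) (l₂.foldr B.mul B.e) := by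
  induction l₁ with
  | nil => simp [B.e_mul]
  | cons a t ih => simp [ih, B.mul_assoc]

/-- The contraction morphism `d : !A → !A ⊗ !A`: the diagonal together with
`(G, H) ↦ λu. G u u ++ H u u` is a dialectica morphism from `!A` to
`!A ⊗ !A`, because `(!α)(u, l₁ ++ l₂) = (!α)(u, l₁) ∘ (!α)(u, l₂)`. -/
theorem bang_contraction {M : Type*} [PartialOrder M] (B : BiclosedPoset M)
    {U X : Type*} (α : U × X → M) :
    IsDialMorph (bangRel B α) (tensorRel B (bangRel B α) (bangRel B α))
      (fun u => (u, u))
      (fun GH => fun u => GH.1 u u ++ GH.2 u u) := by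
  intro u GH
  apply le_of_eq
  simp only [bangRel, tensorRel, List.map_append]
  exact foldr_mul_append B _ _
end

section
/- Let M be a biclosed poset and A = (U,X,α) a dialectica Lambek space over M. Then the pair δ_! — whose first component is id_U and whose second component sends g : U → List(U → List X) to the function λu. List.join (List.map (λh. h u) (g u)) : U → List X — is a dialectica morphism from !A to !!A, because the ordered product over a flattened list of lists equals the iterated ordered product: (!α)(u, join of the lists) = ((!(!α))(u, g)). -/
namespace BiclosedPoset

variable {M : Type*} [PartialOrder M] (B : BiclosedPoset M)

theorem foldr_append (l₁ l₂ : List M) :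
    (l₁ ++ l₂).foldr B.mul B.e = B.mul (l₁.foldr B.mul B.e) (l₂.foldr B.mul B.e) := by
  induction l₁ with
  | nil => simp [B.e_mul]
  | cons a t ih => simp [ih, B.mul_assoc]

theorem foldr_flatten (L : List (List M)) :
    L.flatten.foldr B.mul B.e = (L.map (·.foldr B.mul B.e)).foldr B.mul B.e := by
  induction L with
  | nil => rfl
  | cons l L ih => simp only [List.flatten_cons, foldr_append, ih, List.map_cons, List.foldr_cons]

end BiclosedPoset

/-- The comultiplication `δ_! : !A → !!A`: the identity together with
`g ↦ λu. List.flatten (List.map (λh. h u) (g u))` is a dialectica morphism from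
`!A` to `!!A`, because the ordered product over a flattened list of lists
equals the iterated ordered product. -/
theorem bang_comult {M : Type*} [PartialOrder M] (B : BiclosedPoset M)
    {U X : Type*} (α : U × X → M) :
    IsDialMorph (bangRel B α) (bangRel B (bangRel B α))
      (fun u => u)
      (fun g => fun u => List.flatten (List.map (fun h => h u) (g u))) := by
  intro u g
  refine le_of_eq ?_
  simp only [bangRel, List.map_flatten, B.foldr_flatten, List.map_map]
  rfl
end
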